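/- Let G be a finite simple graph and u, v adjacent true twins (N[u] = N[v]). If S is a defensive alliance in G containing u but not v, then (S \ {u}) ∪ {v} is also a defensive alliance in G. -/
import Mathlib


open Finset

variable {V : Type*} [Fintype V] [DecidableEq V]

open scoped Classical

/-- `dS G S v` = number of neighbours of `v` lying in `S`. -/
noncomputable def dS (G : SimpleGraph V) (S : Finset V) (v : V) : ℕ :=
  (S.filter fun u => G.Adj v u).card

/-- A nonempty `S` is a defensive alliance if every `v ∈ S` satisfies
`d_S(v) + 1 ≥ d_{S^c}(v)`. -/
def DefensiveAlliance (G : SimpleGraph V) (S : Finset V) : Prop :=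
  S.Nonempty ∧ ∀ v ∈ S, dS G Sᶜ v ≤ dS G S v + 1

theorem stmt_17 (G : SimpleGraph V) (u v : V) (huv : G.Adj u v)
    (htwin : ∀ w : V, (G.Adj u w ∨ w = u) ↔ (G.Adj v w ∨ w = v))
    (S : Finset V) (hDA : DefensiveAlliance G S) (huS : u ∈ S) (hvS : v ∉ S) :
    DefensiveAlliance G (insert v (S.erase u)) := by
  have hne : u ≠ v := G.ne_of_adj huv
  set σ := Equiv.swap u v with hσ
  -- twin fact for vertices other than u, v
  have h1 : ∀ w, w ≠ u → w ≠ v → (G.Adj u w ↔ G.Adj v w) := by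
    intro w hwu hwv
    have := htwin w
    constructor
    · intro h; rcases this.mp (Or.inl h) with h' | h'
      · exact h'
      · exact absurd h' hwv
    · intro h; rcases this.mpr (Or.inl h) with h' | h'
      · exact h'
      · exact absurd h' hwu
  -- swap is a graph automorphism
  have hAdj : ∀ a b, G.Adj (σ a) (σ b) ↔ G.Adj a b := by
    have key : ∀ a b, G.Adj a b → G.Adj (σ a) (σ b) := by
      intro a b hab
      by_cases hau : a = u
      · by_cases hbv : b = v
        · rw [hau, hbv] at hab ⊢
          simpa [hσ, Equiv.swap_apply_left, Equiv.swap_apply_right] using hab.symm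
        · rw [hau] at hab ⊢
          have hbu : b ≠ u := fun h => (G.irrefl (h ▸ hab)).elim
          simp only [hσ, Equiv.swap_apply_left, Equiv.swap_apply_of_ne_of_ne hbu hbv]
          exact (h1 b hbu hbv).mp hab
      · by_cases hav : a = v
        · by_cases hbu : b = u
          · rw [hav, hbu] at hab ⊢
            simpa [hσ, Equiv.swap_apply_left, Equiv.swap_apply_right] using hab.symm
          · rw [hav] at hab ⊢
            have hbv : b ≠ v := fun h => (G.irrefl (h ▸ hab)).elim
            simp only [hσ, Equiv.swap_apply_right, Equiv.swap_apply_of_ne_of_ne hbu hbv]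
            exact (h1 b hbu hbv).mpr hab
        · by_cases hbu : b = u
          · rw [hbu] at hab ⊢
            simp only [hσ, Equiv.swap_apply_left, Equiv.swap_apply_of_ne_of_ne hau hav]
            exact ((h1 a hau hav).mp hab.symm).symm
          · by_cases hbv : b = v
            · rw [hbv] at hab ⊢
              simp only [hσ, Equiv.swap_apply_right, Equiv.swap_apply_of_ne_of_ne hau hav]
              exact ((h1 a hau hav).mpr hab.symm).symm
            · simpa [hσ, Equiv.swap_apply_of_ne_of_ne hau hav,
                Equiv.swap_apply_of_ne_of_ne hbu hbv] using hab
    intro a b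
    constructor
    · intro h
      have := key _ _ h
      simpa [hσ] using this
    · exact key a b
  -- the new set is the image of S under σ
  have hS' : insert v (S.erase u) = S.image σ := by
    ext x
    simp only [Finset.mem_insert, Finset.mem_erase, Finset.mem_image]
    constructor
    · rintro (rfl | ⟨hxu, hxS⟩)
      · exact ⟨u, huS, by simp [hσ]⟩
      · refine ⟨x, hxS, ?_⟩
        have hxv : x ≠ v := fun h => hvS (h ▸ hxS)
        simp [hσ, Equiv.swap_apply_of_ne_of_ne hxu hxv]
    · rintro ⟨y, hyS, rfl⟩
      rcases eq_or_ne y u with rfl | hyu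
      · left; simp [hσ]
      · have hyv : y ≠ v := fun h => hvS (h ▸ hyS)
        right
        rw [hσ, Equiv.swap_apply_of_ne_of_ne hyu hyv]
        exact ⟨hyu, hyS⟩
  -- images commute with complement and dS
  have himg_compl : ∀ T : Finset V, (T.image σ)ᶜ = Tᶜ.image σ := by
    intro T
    ext x
    simp only [Finset.mem_compl, Finset.mem_image]
    constructor
    · intro hx
      refine ⟨σ.symm x, ?_, by simp⟩
      intro h
      exact hx ⟨σ.symm x, h, by simp⟩
    · rintro ⟨y, hy, rfl⟩ ⟨z, hz, hzy⟩
      exact hy (σ.injective hzy ▸ hz)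
  have hdS : ∀ (T : Finset V) (w : V), dS G (T.image σ) (σ w) = dS G T w := by
    intro T w
    unfold dS
    rw [Finset.filter_image]
    rw [Finset.card_image_of_injective _ σ.injective]
    congr 1
    apply Finset.filter_congr
    intro x _
    simp [hAdj]
  obtain ⟨hSne, hmain⟩ := hDA
  constructor
  · exact ⟨v, Finset.mem_insert_self _ _⟩
  · intro w hw
    rw [hS'] at hw
    obtain ⟨y, hyS, rfl⟩ := Finset.mem_image.mp hw
    rw [hS', himg_compl, hdS, hdS]
    exact hmain y hyS
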